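/- Let G be a group with a finite symmetric generating set S such that the word metric d_S on G is δ-hyperbolic for some real δ ≥ 0. Then G has only finitely many conjugacy classes of finite subgroups; i.e., there is a finite list H_1, …, H_n of finite subgroups of G such that every finite subgroup of G is conjugate in G to some H_i. -/
import Mathlib


/-- The word metric on a group `G` with respect to a generating set `S`:
`wordDist S x y` is the least `n` such that `x⁻¹ * y` is a product of `n` elements of `S`. -/
noncomputable def wordDist {G : Type*} [Group G] (S : Set G) (x y : G) : ℕ :=
  sInf {n : ℕ | ∃ l : List G, (∀ s ∈ l, s ∈ S) ∧ l.length = n ∧ x⁻¹ * y = l.prod}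

/-- A distance function `d` on `X` is `δ`-hyperbolic if for all `x,y,z,t` one has
`d x y + d z t ≤ max (d x z + d y t) (d x t + d y z) + 2δ`. -/
def IsHyperbolicDist {X : Type*} (d : X → X → ℝ) (δ : ℝ) : Prop :=
  ∀ x y z t : X, d x y + d z t ≤ max (d x z + d y t) (d x t + d y z) + 2 * δ

/-- The orbit `Hx = {h * x : h ∈ H}` of a point `x` under a subgroup `H`. -/
def orb {G : Type*} [Group G] (H : Subgroup G) (x : G) : Set G :=
  (fun h => h * x) '' (H : Set G)

/-- `setD S K L = max_{k ∈ K, l ∈ L} d_S(k,l)`, the maximal word-metric distance between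
the (finite) sets `K` and `L`.  `setD S K K` is the diameter of `K`. -/
noncomputable def setD {G : Type*} [Group G] (S : Set G) (K L : Set G) : ℕ :=
  sSup {n : ℕ | ∃ k ∈ K, ∃ l ∈ L, wordDist S k l = n}

section Aux

variable {G : Type*} [Group G] {S : Set G}

lemma exists_word_aux (hsymm : S⁻¹ = S) (hgen : Subgroup.closure S = ⊤) (g : G) :
    ∃ l : List G, (∀ s ∈ l, s ∈ S) ∧ l.prod = g := by
  have h1 : g ∈ (Subgroup.closure S).toSubmonoid := by rw [hgen]; trivial
  rw [Subgroup.closure_toSubmonoid, hsymm, Set.union_self] at h1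
  exact Submonoid.exists_list_of_mem_closure h1

lemma wordDist_set_nonempty (hsymm : S⁻¹ = S) (hgen : Subgroup.closure S = ⊤) (x y : G) :
    {n : ℕ | ∃ l : List G, (∀ s ∈ l, s ∈ S) ∧ l.length = n ∧ x⁻¹ * y = l.prod}.Nonempty := by
  obtain ⟨l, hl, hprod⟩ := exists_word_aux hsymm hgen (x⁻¹ * y)
  exact ⟨l.length, l, hl, rfl, hprod.symm⟩

lemma wordDist_spec (hsymm : S⁻¹ = S) (hgen : Subgroup.closure S = ⊤) (x y : G) :
    ∃ l : List G, (∀ s ∈ l, s ∈ S) ∧ l.length = wordDist S x y ∧ x⁻¹ * y = l.prod :=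
  Nat.sInf_mem (wordDist_set_nonempty hsymm hgen x y)

lemma wordDist_le (x y : G) {l : List G} (hl : ∀ s ∈ l, s ∈ S) (hprod : x⁻¹ * y = l.prod) :
    wordDist S x y ≤ l.length :=
  Nat.sInf_le ⟨l, hl, rfl, hprod⟩

lemma wordDist_mul_left (g x y : G) : wordDist S (g * x) (g * y) = wordDist S x y := by
  have h : (g * x)⁻¹ * (g * y) = x⁻¹ * y := by group
  simp only [wordDist, h]

lemma wordDist_le_comm (hsymm : S⁻¹ = S) (hgen : Subgroup.closure S = ⊤) (x y : G) :
    wordDist S y x ≤ wordDist S x y := by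
  obtain ⟨l, hl, hlen, hprod⟩ := wordDist_spec hsymm hgen x y
  have hprod' : y⁻¹ * x = ((l.map (fun a => a⁻¹)).reverse).prod := by
    rw [← List.prod_inv_reverse, ← hprod]; group
  have hmem : ∀ s ∈ (l.map (fun a => a⁻¹)).reverse, s ∈ S := by
    intro s hs
    rw [List.mem_reverse, List.mem_map] at hs
    obtain ⟨a, ha, rfl⟩ := hs
    rw [← hsymm]
    exact Set.inv_mem_inv.mpr (hl a ha)
  calc wordDist S y x ≤ ((l.map (fun a => a⁻¹)).reverse).length :=
        wordDist_le y x hmem hprod'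
    _ = wordDist S x y := by simp [hlen]

lemma wordDist_comm (hsymm : S⁻¹ = S) (hgen : Subgroup.closure S = ⊤) (x y : G) :
    wordDist S x y = wordDist S y x :=
  le_antisymm (wordDist_le_comm hsymm hgen y x) (wordDist_le_comm hsymm hgen x y)

lemma exists_mid (hsymm : S⁻¹ = S) (hgen : Subgroup.closure S = ⊤) (x y : G) (k : ℕ)
    (hk : k ≤ wordDist S x y) :
    ∃ m : G, wordDist S x m ≤ k ∧ wordDist S m y ≤ wordDist S x y - k := by
  obtain ⟨l, hl, hlen, hprod⟩ := wordDist_spec hsymm hgen x y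
  refine ⟨x * (l.take k).prod, ?_, ?_⟩
  · have h1 : x⁻¹ * (x * (l.take k).prod) = (l.take k).prod := by group
    have := wordDist_le x (x * (l.take k).prod) (fun s hs => hl s (List.mem_of_mem_take hs)) h1
    simpa [hlen, hk] using this
  · have h2 : (x * (l.take k).prod)⁻¹ * y = (l.drop k).prod := by
      have hsplit : l.prod = (l.take k).prod * (l.drop k).prod := by
        rw [← List.prod_append, List.take_append_drop]
      calc (x * (l.take k).prod)⁻¹ * y = (l.take k).prod⁻¹ * (x⁻¹ * y) := by group
        _ = (l.take k).prod⁻¹ * ((l.take k).prod * (l.drop k).prod) := by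
            rw [hprod, hsplit]
        _ = (l.drop k).prod := by group
    have := wordDist_le (x * (l.take k).prod) y
      (fun s hs => hl s (List.mem_of_mem_drop hs)) h2
    simpa [hlen] using this

lemma products_finite (hfin : S.Finite) (N : ℕ) :
    {g : G | ∃ l : List G, (∀ s ∈ l, s ∈ S) ∧ l.length ≤ N ∧ g = l.prod}.Finite := by
  induction N with
  | zero =>
    apply Set.Finite.subset (Set.finite_singleton (1 : G))
    rintro g ⟨l, _, hlen, rfl⟩
    have : l = [] := List.length_eq_zero_iff.mp (Nat.le_zero.mp hlen)
    simp [this]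
  | succ N ih =>
    apply Set.Finite.subset
      (Set.Finite.insert (1 : G) (Set.Finite.biUnion hfin
        (fun a _ => ih.image (fun g => a * g))))
    rintro g ⟨l, hl, hlen, rfl⟩
    cases l with
    | nil => simp
    | cons a l' =>
      right
      refine Set.mem_biUnion (hl a (by simp)) ⟨l'.prod, ?_, by simp⟩
      exact ⟨l', fun s hs => hl s (by simp [hs]), by simpa using hlen, rfl⟩

lemma ball_finite (hfin : S.Finite) (hsymm : S⁻¹ = S) (hgen : Subgroup.closure S = ⊤) (N : ℕ) :
    {g : G | wordDist S 1 g ≤ N}.Finite := by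
  apply Set.Finite.subset (products_finite hfin N)
  intro g hg
  obtain ⟨l, hl, hlen, hprod⟩ := wordDist_spec hsymm hgen 1 g
  exact ⟨l, hl, hlen.le.trans hg, by simpa using hprod⟩

end Aux

/-- A group whose word metric (w.r.t. a finite symmetric generating set) is
δ-hyperbolic has only finitely many conjugacy classes of finite subgroups. -/
theorem finitely_many_conjugacy_classes_of_finite_subgroups
    {G : Type*} [Group G] (S : Set G) (hfin : S.Finite) (hsymm : S⁻¹ = S)
    (hone : (1 : G) ∉ S) (hgen : Subgroup.closure S = ⊤)
    (δ : ℝ) (hδ : 0 ≤ δ)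
    (hhyp : IsHyperbolicDist (fun x y => (wordDist S x y : ℝ)) δ) :
    ∃ (n : ℕ) (Hs : Fin n → Subgroup G),
      (∀ i, ((Hs i : Subgroup G) : Set G).Finite) ∧
      ∀ H : Subgroup G, ((H : Subgroup G) : Set G).Finite →
        ∃ (i : Fin n) (g : G), H = (Hs i).map (MulAut.conj g).toMonoidHom := by
  classical
  set N : ℕ := ⌈4 * δ⌉₊ + 1 with hN
  -- Key claim: every finite subgroup has a conjugate inside the ball of radius N.
  have key : ∀ H : Subgroup G, ((H : Subgroup G) : Set G).Finite →
      ∃ x₀ : G, ∀ h ∈ H, wordDist S 1 (x₀⁻¹ * h * x₀) ≤ N := by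
    intro H hH
    set T : Finset G := hH.toFinset with hT
    have hTmem : ∀ k : G, k ∈ T ↔ k ∈ H := by
      intro k; simp [hT, Set.Finite.mem_toFinset]
    have hTne : T.Nonempty := ⟨1, (hTmem 1).mpr H.one_mem⟩
    set rad : G → ℕ := fun x => T.sup (fun k => wordDist S x k) with hrad
    -- invariance of rad under H
    have hinv : ∀ h ∈ H, ∀ x : G, rad (h * x) = rad x := by
      intro h hh x
      have h1 : ∀ k : G, wordDist S (h * x) k = wordDist S x (h⁻¹ * k) := by
        intro k
        have := wordDist_mul_left (S := S) h⁻¹ (h * x) k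
        simpa [inv_mul_cancel_left] using this.symm
      have h2 : T.image (fun k => h⁻¹ * k) = T := by
        ext k
        simp only [Finset.mem_image, hTmem]
        constructor
        · rintro ⟨j, hj, rfl⟩; exact H.mul_mem (H.inv_mem hh) hj
        · intro hk; exact ⟨h * k, H.mul_mem hh hk, by group⟩
      calc rad (h * x) = T.sup (fun k => wordDist S x (h⁻¹ * k)) := by
            simp only [hrad]; exact Finset.sup_congr rfl (fun k _ => h1 k)
        _ = (T.image (fun k => h⁻¹ * k)).sup (fun k => wordDist S x k) := by
            rw [Finset.sup_image]; rfl
        _ = rad x := by rw [h2]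
    -- minimizer of rad
    obtain ⟨x₀, hx₀⟩ : ∃ x₀ : G, rad x₀ = sInf (Set.range rad) :=
      Nat.sInf_mem (Set.range_nonempty rad)
    set r₀ : ℕ := sInf (Set.range rad) with hr₀
    have hmin : ∀ x : G, r₀ ≤ rad x := fun x => Nat.sInf_le (Set.mem_range_self x)
    refine ⟨x₀, fun h hh => ?_⟩
    -- it suffices to bound wordDist S x₀ (h * x₀)
    have hconj : wordDist S 1 (x₀⁻¹ * h * x₀) = wordDist S x₀ (h * x₀) := by
      have := wordDist_mul_left (S := S) x₀ 1 (x₀⁻¹ * h * x₀)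
      rw [← this]
      congr 1
      · group
      · group
    rw [hconj]
    set n : ℕ := wordDist S x₀ (h * x₀) with hn
    -- approximate midpoint
    have hk : (n + 1) / 2 ≤ n := by omega
    obtain ⟨m, hm1, hm2⟩ := exists_mid hsymm hgen x₀ (h * x₀) ((n + 1) / 2) hk
    have hm2' : wordDist S m (h * x₀) ≤ n / 2 := by
      have : n - (n + 1) / 2 = n / 2 := by omega
      rwa [this] at hm2
    -- a farthest point of T from m
    obtain ⟨y, hyT, hy⟩ := Finset.exists_mem_eq_sup T hTne (fun k => wordDist S m k)
    have hyH : y ∈ H := (hTmem y).mp hyT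
    -- distance bounds
    have b1 : wordDist S x₀ y ≤ r₀ := by
      rw [← hx₀]; exact Finset.le_sup hyT
    have b2 : wordDist S (h * x₀) y ≤ r₀ := by
      rw [← hx₀, ← hinv h hh x₀]; exact Finset.le_sup hyT
    have b3 : (r₀ : ℕ) ≤ wordDist S m y := by
      rw [← hy]; exact hmin m
    -- hyperbolicity
    have hyp := hhyp x₀ (h * x₀) y m
    simp only at hyp
    have hsym1 : wordDist S y m = wordDist S m y := wordDist_comm hsymm hgen y m
    have hsym2 : wordDist S (h * x₀) m = wordDist S m (h * x₀) :=
      wordDist_comm hsymm hgen (h * x₀) m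
    rw [hsym1, hsym2] at hyp
    -- now derive (n : ℝ) ≤ 4δ + 1
    have hhalf : ((n + 1) / 2 : ℕ) ≤ ((n : ℝ) + 1) / 2 := by
      have := Nat.cast_div_le (α := ℝ) (m := n + 1) (n := 2)
      push_cast at this ⊢
      linarith
    have hnd : (n / 2 : ℕ) ≤ (((n + 1) / 2 : ℕ) : ℝ) := by
      exact_mod_cast Nat.div_le_div_right (Nat.le_succ n)
    have hmax : max ((wordDist S x₀ y : ℝ) + wordDist S m (h * x₀))
        ((wordDist S x₀ m : ℝ) + wordDist S (h * x₀) y)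
        ≤ (r₀ : ℝ) + (((n + 1) / 2 : ℕ) : ℝ) := by
      apply max_le
      · have e1 : (wordDist S x₀ y : ℝ) ≤ r₀ := by exact_mod_cast b1
        have e2 : (wordDist S m (h * x₀) : ℝ) ≤ ((n / 2 : ℕ) : ℝ) := by exact_mod_cast hm2'
        linarith
      · have e1 : (wordDist S x₀ m : ℝ) ≤ (((n + 1) / 2 : ℕ) : ℝ) := by exact_mod_cast hm1
        have e2 : (wordDist S (h * x₀) y : ℝ) ≤ r₀ := by exact_mod_cast b2
        linarith
    have hlow : (n : ℝ) + r₀ ≤ (wordDist S x₀ (h * x₀) : ℝ) + wordDist S m y := by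
      have : (r₀ : ℝ) ≤ wordDist S m y := by exact_mod_cast b3
      rw [← hn]; linarith
    have hfinal : (n : ℝ) ≤ 4 * δ + 1 := by
      have : (n : ℝ) + r₀ ≤ (r₀ : ℝ) + (((n + 1) / 2 : ℕ) : ℝ) + 2 * δ :=
        le_trans hlow (le_trans hyp (by linarith))
      have h2 : (n : ℝ) ≤ ((n : ℝ) + 1) / 2 + 2 * δ := by linarith
      linarith
    -- conclude n ≤ N
    have : (n : ℝ) ≤ (N : ℝ) := by
      have := Nat.le_ceil (4 * δ)
      have hNr : (4 : ℝ) * δ + 1 ≤ (N : ℝ) := by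
        rw [hN]; push_cast; linarith
      linarith
    exact_mod_cast this
  -- the ball of radius N is finite
  have hB : {g : G | wordDist S 1 g ≤ N}.Finite := ball_finite hfin hsymm hgen N
  set B : Set G := {g : G | wordDist S 1 g ≤ N} with hBdef
  -- the collection of subgroups contained in B is finite
  have h𝒮 : {K : Subgroup G | (K : Set G) ⊆ B}.Finite := by
    have himg : ((fun K : Subgroup G => (K : Set G)) ''
        {K : Subgroup G | (K : Set G) ⊆ B}).Finite := by
      apply hB.finite_subsets.subset
      rintro _ ⟨K, hK, rfl⟩
      exact hK
    exact Set.Finite.of_finite_image himg (SetLike.coe_injective.injOn)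
  obtain ⟨n, f, hf⟩ := h𝒮.fin_embedding
  refine ⟨n, fun i => f i, fun i => ?_, fun H hH => ?_⟩
  · have : ((f i : Subgroup G) : Set G) ⊆ B := by
      have : f i ∈ {K : Subgroup G | (K : Set G) ⊆ B} := by
        rw [← hf]; exact Set.mem_range_self i
      exact this
    exact hB.subset this
  · obtain ⟨x₀, hx₀⟩ := key H hH
    set K : Subgroup G := H.map (MulAut.conj x₀⁻¹).toMonoidHom with hK
    have hKB : (K : Set G) ⊆ B := by
      rintro _ ⟨h, hh, rfl⟩
      show wordDist S 1 _ ≤ N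
      have : (MulAut.conj x₀⁻¹).toMonoidHom h = x₀⁻¹ * h * x₀ := by
        simp [MulAut.conj_apply]
      rw [this]
      exact hx₀ h hh
    have hKmem : K ∈ Set.range f := by rw [hf]; exact hKB
    obtain ⟨i, hi⟩ := hKmem
    refine ⟨i, x₀, ?_⟩
    show H = Subgroup.map (MulAut.conj x₀).toMonoidHom (f i)
    rw [hi, hK, Subgroup.map_map]
    have : ((MulAut.conj x₀).toMonoidHom).comp ((MulAut.conj x₀⁻¹).toMonoidHom)
        = MonoidHom.id G := by
      ext x
      simp [MulAut.conj_apply]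
      group
    rw [this, Subgroup.map_id]
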